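/- Assume there exists u ∈ A with ‖u‖ = φ(u) = 1. Then the restriction map m ↦ m|_{UCB} is a bijection from the set of topologically invariant means on A* onto the set of topologically invariant means on UCB. -/

import Mathlib

open ContinuousLinearMap

noncomputable section
set_option linter.unusedSectionVars false
set_option synthInstance.maxHeartbeats 1000000
set_option maxHeartbeats 1000000

variable (A : Type*) [NormedCommRing A] [NormedAlgebra ℂ A] [CompleteSpace A]

/-- The action `u · T` of `A` on `A*`, given by `⟨u · T, v⟩ = ⟨T, u v⟩`. -/
def act (u : A) (T : StrongDual ℂ A) : StrongDual ℂ A :=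
  T.comp (ContinuousLinearMap.mul ℂ A u)

@[simp] lemma act_apply (u : A) (T : StrongDual ℂ A) (v : A) :
    act A u T v = T (u * v) := rfl

/-- `UCB`: the closed linear span in `A*` of `{u · T : u ∈ A, T ∈ A*}`. -/
def UCB : Submodule ℂ (StrongDual ℂ A) :=
  (Submodule.span ℂ
    {g | ∃ (u : A) (T : StrongDual ℂ A), g = act A u T}).topologicalClosure

/-- let `A` be a commutative Banach algebra and `φ` a nonzero multiplicative
linear functional of norm `1` on `A`; assume there is `u₀ ∈ A` with `‖u₀‖ = φ(u₀) = 1`.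
Then the restriction map `m ↦ m|_{UCB}` is a bijection from the set of topologically
invariant means on `A*` onto the set of topologically invariant means on `UCB`.
(A topologically invariant mean on an invariant closed subspace `Y ∋ φ` of `A*` is an
`m ∈ Y*` with `‖m‖ = ⟨m, φ⟩ = 1` and `⟨m, u·T⟩ = φ(u) ⟨m, T⟩` for `u ∈ A`, `T ∈ Y`.) -/
theorem stmt6
    (φ : StrongDual ℂ A)
    (hφmul : ∀ u v : A, φ (u * v) = φ u * φ v)
    (hφne : φ ≠ 0) (hφnorm : ‖φ‖ = 1)
    (u₀ : A) (hu₀norm : ‖u₀‖ = 1) (hu₀φ : φ u₀ = 1)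
    (hφU : φ ∈ UCB A)
    (hinv : ∀ (u : A), ∀ T ∈ UCB A, act A u T ∈ UCB A) :
    Set.BijOn
      (fun m : StrongDual ℂ (StrongDual ℂ A) => m.comp (UCB A).subtypeL)
      {m : StrongDual ℂ (StrongDual ℂ A) |
        ‖m‖ = 1 ∧ m φ = 1 ∧
        ∀ (u : A) (T : StrongDual ℂ A), m (act A u T) = φ u * m T}
      {m : StrongDual ℂ (UCB A) |
        @norm (StrongDual ℂ (UCB A)) (ContinuousLinearMap.hasOpNorm (𝕜 := ℂ) (𝕜₂ := ℂ)
          (E := UCB A) (F := ℂ) (σ₁₂ := RingHom.id ℂ)) m = 1 ∧ m ⟨φ, hφU⟩ = 1 ∧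
        ∀ (u : A) (T : UCB A),
          m ⟨act A u (T : StrongDual ℂ A), hinv u T T.2⟩ = φ u * m T} := by
  -- helper facts
  have hmem : ∀ (u : A) (T : StrongDual ℂ A), act A u T ∈ UCB A := fun u T =>
    Submodule.le_topologicalClosure _ (Submodule.subset_span ⟨u, T, rfl⟩)
  have hactφ : act A u₀ φ = φ := by
    ext v; simp [act_apply, hφmul, hu₀φ]
  have hcomm : ∀ (u : A) (T : StrongDual ℂ A),
      act A u₀ (act A u T) = act A u (act A u₀ T) := by
    intro u T; ext v; simp [act_apply, mul_left_comm]
  have hφUn : ‖(⟨φ, hφU⟩ : UCB A)‖ = 1 := hφnorm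
  constructor
  · -- MapsTo
    rintro m ⟨h1, h2, h3⟩
    refine ⟨?_, ?_, ?_⟩
    · apply le_antisymm
      · apply ContinuousLinearMap.opNorm_le_bound _ zero_le_one
        intro x
        calc ‖m ((UCB A).subtypeL x)‖ ≤ ‖m‖ * ‖x‖ := m.le_opNorm x
          _ = 1 * ‖x‖ := by rw [h1]
      · have := ContinuousLinearMap.le_opNorm (𝕜 := ℂ) (𝕜₂ := ℂ) (E := UCB A) (F := ℂ) (σ₁₂ := RingHom.id ℂ) (m.comp (UCB A).subtypeL) (⟨φ, hφU⟩ : UCB A)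
        simp only [ContinuousLinearMap.comp_apply, Submodule.subtypeL_apply, h2, hφUn,
          mul_one, norm_one] at this
        exact this
    · simpa using h2
    · intro u T
      simpa using h3 u T
  refine ⟨?_, ?_⟩
  · -- InjOn
    rintro m₁ ⟨_, _, h₁3⟩ m₂ ⟨_, _, h₂3⟩ he
    ext T
    have e1 : m₁ T = m₁ (act A u₀ T) := by rw [h₁3, hu₀φ, one_mul]
    have e2 : m₂ T = m₂ (act A u₀ T) := by rw [h₂3, hu₀φ, one_mul]
    have := congrFun (congrArg DFunLike.coe he) (⟨act A u₀ T, hmem u₀ T⟩ : UCB A)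
    simpa [e1, e2] using this
  · -- SurjOn
    rintro n ⟨hn1, hn2, hn3⟩
    set c : StrongDual ℂ A →L[ℂ] UCB A :=
      ContinuousLinearMap.codRestrict
        ((ContinuousLinearMap.compL ℂ A A ℂ).flip (ContinuousLinearMap.mul ℂ A u₀))
        (UCB A) (fun T => hmem u₀ T) with hc
    have hcT : ∀ T : StrongDual ℂ A, (c T : StrongDual ℂ A) = act A u₀ T :=
      fun T => rfl
    set m : StrongDual ℂ (StrongDual ℂ A) := n.comp c with hm
    have hmT : ∀ T : StrongDual ℂ A, m T = n ⟨act A u₀ T, hmem u₀ T⟩ := fun T => rfl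
    have hmφ : m φ = 1 := by
      rw [hmT]
      have : (⟨act A u₀ φ, hmem u₀ φ⟩ : UCB A) = ⟨φ, hφU⟩ := Subtype.ext hactφ
      rw [this, hn2]
    have hminv : ∀ (u : A) (T : StrongDual ℂ A), m (act A u T) = φ u * m T := by
      intro u T
      rw [hmT, hmT]
      have e : (⟨act A u₀ (act A u T), hmem u₀ (act A u T)⟩ : UCB A)
          = ⟨act A u ((⟨act A u₀ T, hmem u₀ T⟩ : UCB A) : StrongDual ℂ A),
              hinv u _ (hmem u₀ T)⟩ := Subtype.ext (hcomm u T)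
      rw [e, hn3]
    have hmnorm : ‖m‖ = 1 := by
      apply le_antisymm
      · apply ContinuousLinearMap.opNorm_le_bound _ zero_le_one
        intro T
        have h1 : ‖m T‖ ≤ @norm (StrongDual ℂ (UCB A)) (ContinuousLinearMap.hasOpNorm (𝕜 := ℂ) (𝕜₂ := ℂ) (E := UCB A) (F := ℂ) (σ₁₂ := RingHom.id ℂ)) n * ‖c T‖ :=
          ContinuousLinearMap.le_opNorm (𝕜 := ℂ) (𝕜₂ := ℂ) (E := UCB A) (F := ℂ) (σ₁₂ := RingHom.id ℂ) n (c T)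
        have h2 : ‖c T‖ = ‖act A u₀ T‖ := rfl
        have h3 : ‖act A u₀ T‖ ≤ ‖T‖ := by
          calc ‖act A u₀ T‖ ≤ ‖T‖ * ‖ContinuousLinearMap.mul ℂ A u₀‖ :=
                ContinuousLinearMap.opNorm_comp_le _ _
            _ ≤ ‖T‖ * ‖u₀‖ := by
                gcongr; exact ContinuousLinearMap.opNorm_mul_apply_le ℂ A u₀
            _ = ‖T‖ := by rw [hu₀norm, mul_one]
        calc ‖m T‖ ≤ @norm (StrongDual ℂ (UCB A)) (ContinuousLinearMap.hasOpNorm (𝕜 := ℂ) (𝕜₂ := ℂ) (E := UCB A) (F := ℂ) (σ₁₂ := RingHom.id ℂ)) n * ‖c T‖ := h1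
          _ = 1 * ‖act A u₀ T‖ := by rw [hn1, h2]
          _ ≤ 1 * ‖T‖ := by gcongr
      · have := m.le_opNorm φ
        rw [hmφ, hφnorm, mul_one, norm_one] at this
        exact this
    refine ⟨m, ⟨hmnorm, hmφ, hminv⟩, ?_⟩
    ext T
    have e : (⟨act A u₀ (T : StrongDual ℂ A), hmem u₀ T⟩ : UCB A)
        = ⟨act A u₀ (T : StrongDual ℂ A), hinv u₀ T T.2⟩ := rfl
    simp only [ContinuousLinearMap.comp_apply, Submodule.subtypeL_apply]
    rw [hmT, e, hn3, hu₀φ, one_mul]
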